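/- arXiv:2305.11650 — 2 statements merged into one kernel-verified Lean document; each statement's English description precedes it below -/
import Mathlib

section
/- (Analytical covariance identity) Under the same setup as Tweedie's formula, the posterior covariance Σ(x̃) = ∫ x x^T q(x|x̃) dx - μ(x̃)μ(x̃)^T satisfies Σ(x̃) = σ² ∇_{x̃} μ(x̃) = σ⁴ ∇²_{x̃} log q̃(x̃) + σ² I. -/
open MeasureTheory Real

/-- Gaussian density of `N(0, σ²I)` on `ℝ^d`. -/
noncomputable def gaussDensity (d : ℕ) (σ : ℝ) (z : Fin d → ℝ) : ℝ :=
  (2 * π * σ ^ 2) ^ (-(d : ℝ) / 2) * Real.exp (-(∑ i, (z i) ^ 2) / (2 * σ ^ 2))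

namespace AnalyticalCov

variable {d : ℕ} {σ : ℝ}

lemma gauss_pos (hσ : 0 < σ) (z : Fin d → ℝ) : 0 < gaussDensity d σ z := by
  unfold gaussDensity
  positivity

lemma gauss_cont : Continuous (gaussDensity d σ) := by
  unfold gaussDensity
  fun_prop

lemma sq_norm_le (z : Fin d → ℝ) : ‖z‖ ^ 2 ≤ ∑ i, (z i) ^ 2 := by
  have h : ‖z‖ ≤ Real.sqrt (∑ i, (z i) ^ 2) := by
    rw [pi_norm_le_iff_of_nonneg (Real.sqrt_nonneg _)]
    intro i
    have h1 : (z i) ^ 2 ≤ ∑ i, (z i) ^ 2 :=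
      Finset.single_le_sum (f := fun i => (z i) ^ 2) (fun _ _ => sq_nonneg _)
        (Finset.mem_univ i)
    calc ‖z i‖ = Real.sqrt ((z i) ^ 2) := by
          rw [Real.sqrt_sq_eq_abs]; rfl
      _ ≤ Real.sqrt (∑ i, (z i) ^ 2) := Real.sqrt_le_sqrt h1
  calc ‖z‖ ^ 2 ≤ Real.sqrt (∑ i, (z i) ^ 2) ^ 2 :=
        pow_le_pow_left₀ (norm_nonneg _) h 2
    _ = ∑ i, (z i) ^ 2 := Real.sq_sqrt (Finset.sum_nonneg fun _ _ => sq_nonneg _)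

lemma gauss_le (hσ : 0 < σ) (z : Fin d → ℝ) :
    gaussDensity d σ z ≤ (2 * π * σ ^ 2) ^ (-(d : ℝ) / 2) * Real.exp (-‖z‖ ^ 2 / (2 * σ ^ 2)) := by
  unfold gaussDensity
  have hc : (0:ℝ) < (2 * π * σ ^ 2) ^ (-(d : ℝ) / 2) := by positivity
  refine mul_le_mul_of_nonneg_left (Real.exp_le_exp.2 ?_) hc.le
  have h2σ : (0:ℝ) < 2 * σ ^ 2 := by positivity
  gcongr
  exact sq_norm_le z

lemma poly_gauss_bound (hσ : 0 < σ) {A : ℝ} (hA : 0 ≤ A) (n : ℕ) :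
    ∃ B : ℝ, 0 ≤ B ∧ ∀ z : Fin d → ℝ,
      (A + ‖z‖) ^ n * gaussDensity d σ z ≤ B := by
  refine ⟨(A + 1) ^ n * ((2 * π * σ ^ 2) ^ (-(d : ℝ) / 2) *
      Real.exp ((n : ℝ) ^ 2 * σ ^ 2 / 2)), by positivity, fun z => ?_⟩
  set t := ‖z‖ with ht_def
  have ht : 0 ≤ t := norm_nonneg _
  have hc : (0:ℝ) < (2 * π * σ ^ 2) ^ (-(d : ℝ) / 2) := by positivity
  have h1 : (A + t) ^ n ≤ (A + 1) ^ n * Real.exp ((n : ℝ) * t) := by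
    have e1 : A + t ≤ (A + 1) * Real.exp t := by
      nlinarith [Real.add_one_le_exp t]
    calc (A + t) ^ n ≤ ((A + 1) * Real.exp t) ^ n :=
          pow_le_pow_left₀ (by positivity) e1 n
      _ = (A + 1) ^ n * Real.exp ((n : ℝ) * t) := by
          rw [mul_pow, ← Real.exp_nat_mul]
  have h2 : Real.exp ((n : ℝ) * t) * Real.exp (-t ^ 2 / (2 * σ ^ 2)) ≤
      Real.exp ((n : ℝ) ^ 2 * σ ^ 2 / 2) := by
    rw [← Real.exp_add, Real.exp_le_exp]
    rw [← sub_nonneg]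
    have h2σ : (0:ℝ) < 2 * σ ^ 2 := by positivity
    have : (n : ℝ) ^ 2 * σ ^ 2 / 2 - ((n : ℝ) * t + -t ^ 2 / (2 * σ ^ 2)) =
        (t - (n : ℝ) * σ ^ 2) ^ 2 / (2 * σ ^ 2) := by
      field_simp
      ring
    rw [this]
    positivity
  calc (A + t) ^ n * gaussDensity d σ z
      ≤ (A + t) ^ n * ((2 * π * σ ^ 2) ^ (-(d : ℝ) / 2) *
          Real.exp (-t ^ 2 / (2 * σ ^ 2))) :=
        mul_le_mul_of_nonneg_left (gauss_le hσ z) (by positivity)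
    _ ≤ ((A + 1) ^ n * Real.exp ((n : ℝ) * t)) * ((2 * π * σ ^ 2) ^ (-(d : ℝ) / 2) *
          Real.exp (-t ^ 2 / (2 * σ ^ 2))) := by
        refine mul_le_mul_of_nonneg_right h1 (by positivity)
    _ = (A + 1) ^ n * ((2 * π * σ ^ 2) ^ (-(d : ℝ) / 2) *
          (Real.exp ((n : ℝ) * t) * Real.exp (-t ^ 2 / (2 * σ ^ 2)))) := by ring
    _ ≤ (A + 1) ^ n * ((2 * π * σ ^ 2) ^ (-(d : ℝ) / 2) *
          Real.exp ((n : ℝ) ^ 2 * σ ^ 2 / 2)) := by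
        refine mul_le_mul_of_nonneg_left (mul_le_mul_of_nonneg_left h2 hc.le) (by positivity)

noncomputable def gradG (d : ℕ) (σ : ℝ) (z : Fin d → ℝ) : (Fin d → ℝ) →L[ℝ] ℝ :=
  (-(gaussDensity d σ z) / σ ^ 2) •
    ∑ i, z i • (ContinuousLinearMap.proj i : (Fin d → ℝ) →L[ℝ] ℝ)

lemma gradG_apply (z v : Fin d → ℝ) :
    gradG d σ z v = -(gaussDensity d σ z) / σ ^ 2 * ∑ i, z i * v i := by
  simp [gradG, ContinuousLinearMap.sum_apply, smul_eq_mul]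

lemma gradG_single (z : Fin d → ℝ) (j : Fin d) :
    gradG d σ z (Pi.single j 1) = -(gaussDensity d σ z) / σ ^ 2 * z j := by
  rw [gradG_apply]
  congr 1
  simp [Pi.single_apply, mul_ite]

lemma norm_proj_le (i : Fin d) :
    ‖(ContinuousLinearMap.proj i : (Fin d → ℝ) →L[ℝ] ℝ)‖ ≤ 1 :=
  ContinuousLinearMap.opNorm_le_bound _ zero_le_one fun v => by
    simpa using norm_le_pi_norm v i

lemma norm_gradG_le (hσ : 0 < σ) (z : Fin d → ℝ) :
    ‖gradG d σ z‖ ≤ gaussDensity d σ z / σ ^ 2 * ((d : ℝ) * ‖z‖) := by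
  unfold gradG
  refine le_trans (ContinuousLinearMap.opNorm_smul_le (-(gaussDensity d σ z) / σ ^ 2)
    (∑ i, z i • (ContinuousLinearMap.proj i : (Fin d → ℝ) →L[ℝ] ℝ))) ?_
  have h1 : ‖∑ i, z i • (ContinuousLinearMap.proj i : (Fin d → ℝ) →L[ℝ] ℝ)‖ ≤
      (d : ℝ) * ‖z‖ := by
    calc ‖∑ i, z i • (ContinuousLinearMap.proj i : (Fin d → ℝ) →L[ℝ] ℝ)‖
        ≤ ∑ i : Fin d, ‖z i • (ContinuousLinearMap.proj i : (Fin d → ℝ) →L[ℝ] ℝ)‖ :=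
          norm_sum_le _ _
      _ ≤ ∑ _i : Fin d, ‖z‖ := by
          refine Finset.sum_le_sum fun i _ => ?_
          refine le_trans (ContinuousLinearMap.opNorm_smul_le (z i)
            (ContinuousLinearMap.proj i : (Fin d → ℝ) →L[ℝ] ℝ)) ?_
          calc ‖z i‖ * ‖(ContinuousLinearMap.proj i : (Fin d → ℝ) →L[ℝ] ℝ)‖
              ≤ ‖z‖ * 1 :=
                mul_le_mul (norm_le_pi_norm z i) (norm_proj_le i) (norm_nonneg _)
                  (norm_nonneg _)
            _ = ‖z‖ := mul_one _
      _ = (d : ℝ) * ‖z‖ := by simp [Finset.sum_const, Finset.card_univ, nsmul_eq_mul]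
  have h2 : ‖-(gaussDensity d σ z) / σ ^ 2‖ = gaussDensity d σ z / σ ^ 2 := by
    rw [neg_div, norm_neg, Real.norm_eq_abs, abs_of_nonneg]
    exact div_nonneg (gauss_pos hσ z).le (sq_nonneg σ)
  rw [h2]
  exact mul_le_mul_of_nonneg_left h1 (div_nonneg (gauss_pos hσ z).le (sq_nonneg σ))

lemma hasFDerivAt_gauss (hσ : 0 < σ) (z : Fin d → ℝ) :
    HasFDerivAt (gaussDensity d σ) (gradG d σ z) z := by
  have hS : HasFDerivAt (fun z : Fin d → ℝ => ∑ i, (z i) ^ 2)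
      (∑ i, ((2 : ℝ) * z i) • (ContinuousLinearMap.proj i : (Fin d → ℝ) →L[ℝ] ℝ)) z := by
    refine HasFDerivAt.fun_sum fun i _ => ?_
    have hmul := (ContinuousLinearMap.hasFDerivAt
        (ContinuousLinearMap.proj i : (Fin d → ℝ) →L[ℝ] ℝ) (x := z)).fun_mul
      (ContinuousLinearMap.hasFDerivAt
        (ContinuousLinearMap.proj i : (Fin d → ℝ) →L[ℝ] ℝ) (x := z))
    simp only [ContinuousLinearMap.proj_apply] at hmul
    have hfun : (fun y : Fin d → ℝ => y i * y i) = fun y : Fin d → ℝ => (y i) ^ 2 := by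
      funext w
      rw [pow_two]
    rw [hfun] at hmul
    refine hmul.congr_fderiv ?_
    rw [two_mul, add_smul]
  have h1 : HasFDerivAt (fun z : Fin d → ℝ => -(∑ i, (z i) ^ 2) * (2 * σ ^ 2)⁻¹)
      (((2 * σ ^ 2)⁻¹ : ℝ) •
        (-(∑ i, ((2 : ℝ) * z i) • (ContinuousLinearMap.proj i : (Fin d → ℝ) →L[ℝ] ℝ)))) z := by
    have h := (hS.neg).mul_const ((2 * σ ^ 2)⁻¹ : ℝ)
    exact h
  have h2 := h1.exp
  have h3 := h2.const_mul ((2 * π * σ ^ 2) ^ (-(d : ℝ) / 2))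
  have heq : gaussDensity d σ = (fun z : Fin d → ℝ =>
      (2 * π * σ ^ 2) ^ (-(d : ℝ) / 2) *
        Real.exp (-(∑ i, (z i) ^ 2) * (2 * σ ^ 2)⁻¹)) := by
    funext w
    unfold gaussDensity
    rw [div_eq_mul_inv (-(∑ i, (w i) ^ 2)) (2 * σ ^ 2)]
  rw [← heq] at h3
  refine h3.congr_fderiv ?_
  ext v
  rw [gradG_apply]
  simp only [ContinuousLinearMap.smul_apply, ContinuousLinearMap.neg_apply,
    ContinuousLinearMap.sum_apply, smul_eq_mul, ContinuousLinearMap.proj_apply]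
  have hsum : ∑ x : Fin d, (2 : ℝ) * z x * v x = 2 * ∑ x : Fin d, z x * v x := by
    rw [Finset.mul_sum]
    exact Finset.sum_congr rfl fun x _ => by ring
  rw [hsum]
  have hrexp : Real.exp (-(∑ i, (z i) ^ 2) * (2 * σ ^ 2)⁻¹) =
      Real.exp (-(∑ i, (z i) ^ 2) / (2 * σ ^ 2)) := by
    rw [div_eq_mul_inv]
  rw [hrexp]
  unfold gaussDensity
  have hσ2 : σ ^ 2 ≠ 0 := by positivity
  field_simp

section Q

variable (q : (Fin d → ℝ) → ℝ)

lemma continuous_gradG : Continuous (gradG d σ) := by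
  unfold gradG
  refine Continuous.smul (gauss_cont.neg.div_const _) ?_
  exact continuous_finset_sum _ fun i _ => (continuous_apply i).smul continuous_const

lemma integrable_weight (hσ : 0 < σ) (hq_int : Integrable q)
    (hq_nonneg : ∀ x, 0 ≤ q x) (hqc : Continuous q)
    {w : (Fin d → ℝ) → ℝ} (hw : Continuous w) {C : ℝ} {n : ℕ}
    (hC : ∀ x, |w x| ≤ C * (1 + ‖x‖) ^ n) (y : Fin d → ℝ) :
    Integrable (fun x => w x * (gaussDensity d σ (y - x) * q x)) := by
  obtain ⟨B, hB0, hB⟩ := poly_gauss_bound (d := d) hσ (A := 1 + ‖y‖) (by positivity) n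
  have hC0 : 0 ≤ C := by
    have h := hC 0
    have h1 : (0:ℝ) ≤ |w 0| := abs_nonneg _
    simpa using h1.trans h
  refine Integrable.mono' (hq_int.const_mul (C * B)) ?_ ?_
  · exact (hw.mul ((gauss_cont.comp (continuous_const.sub continuous_id)).mul
      hqc)).aestronglyMeasurable
  · refine Filter.Eventually.of_forall fun x => ?_
    have hxy : 1 + ‖x‖ ≤ (1 + ‖y‖) + ‖y - x‖ := by
      have h := norm_sub_norm_le y x
      have h2 : ‖y‖ - ‖x‖ ≤ ‖y - x‖ := by
        have := abs_norm_sub_norm_le y x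
        have := abs_le.mp this
        linarith [this.2]
      have h3 : ‖x‖ - ‖y‖ ≤ ‖y - x‖ := by
        have := abs_norm_sub_norm_le y x
        have := abs_le.mp this
        linarith [this.1]
      linarith
    have key : (1 + ‖x‖) ^ n * gaussDensity d σ (y - x) ≤ B := by
      refine le_trans ?_ (hB (y - x))
      exact mul_le_mul_of_nonneg_right (pow_le_pow_left₀ (by positivity) hxy n)
        (gauss_pos hσ _).le
    rw [Real.norm_eq_abs, abs_mul, abs_mul, abs_of_nonneg (gauss_pos hσ _).le,
      abs_of_nonneg (hq_nonneg x)]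
    calc |w x| * (gaussDensity d σ (y - x) * q x)
        = (|w x| * gaussDensity d σ (y - x)) * q x := by ring
      _ ≤ ((C * (1 + ‖x‖) ^ n) * gaussDensity d σ (y - x)) * q x := by
          refine mul_le_mul_of_nonneg_right
            (mul_le_mul_of_nonneg_right (hC x) (gauss_pos hσ _).le) (hq_nonneg x)
      _ = (C * ((1 + ‖x‖) ^ n * gaussDensity d σ (y - x))) * q x := by ring
      _ ≤ (C * B) * q x := by
          refine mul_le_mul_of_nonneg_right
            (mul_le_mul_of_nonneg_left key hC0) (hq_nonneg x)

lemma pack (hσ : 0 < σ) (hq_int : Integrable q)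
    (hq_nonneg : ∀ x, 0 ≤ q x) (hqc : Continuous q)
    {w : (Fin d → ℝ) → ℝ} (hw : Continuous w) {C : ℝ} {n : ℕ}
    (hC : ∀ x, |w x| ≤ C * (1 + ‖x‖) ^ n) (y₀ : Fin d → ℝ) :
    ∃ L : (Fin d → ℝ) →L[ℝ] ℝ,
      HasFDerivAt (fun y => ∫ x, w x * (gaussDensity d σ (y - x) * q x)) L y₀ ∧
      ∀ j, L (Pi.single j 1) = (σ ^ 2)⁻¹ *
        ((∫ x, (x j * w x) * (gaussDensity d σ (y₀ - x) * q x)) -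
          y₀ j * ∫ x, w x * (gaussDensity d σ (y₀ - x) * q x)) := by
  have hC0 : 0 ≤ C := by
    have h := hC 0
    have h1 : (0:ℝ) ≤ |w 0| := abs_nonneg _
    simpa using h1.trans h
  obtain ⟨B, hB0, hB⟩ := poly_gauss_bound (d := d) hσ (A := 2 + ‖y₀‖) (by positivity) (n + 1)
  set F' : (Fin d → ℝ) → (Fin d → ℝ) → ((Fin d → ℝ) →L[ℝ] ℝ) :=
    fun y x => (w x * q x) • gradG d σ (y - x) with hF'def
  have hcst : 0 ≤ C * (d : ℝ) * (σ ^ 2)⁻¹ :=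
    mul_nonneg (mul_nonneg hC0 (Nat.cast_nonneg d)) (by positivity)
  have h_bound : ∀ x : Fin d → ℝ, ∀ y ∈ Metric.ball y₀ 1,
      ‖F' y x‖ ≤ (C * (d : ℝ) * (σ ^ 2)⁻¹ * B) * q x := by
    intro x y hy
    have hyn : ‖y‖ ≤ ‖y₀‖ + 1 := by
      have := mem_ball_iff_norm.mp hy
      have h2 := norm_sub_norm_le y y₀
      linarith
    have hxy : 1 + ‖x‖ ≤ (2 + ‖y₀‖) + ‖y - x‖ := by
      have h3 : ‖x‖ - ‖y‖ ≤ ‖y - x‖ := by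
        have := abs_le.mp (abs_norm_sub_norm_le y x)
        linarith [this.1]
      linarith
    have key : ((1 + ‖x‖) ^ n * ‖y - x‖) * gaussDensity d σ (y - x) ≤ B := by
      refine le_trans ?_ (hB (y - x))
      refine mul_le_mul_of_nonneg_right ?_ (gauss_pos hσ _).le
      calc (1 + ‖x‖) ^ n * ‖y - x‖
          ≤ ((2 + ‖y₀‖) + ‖y - x‖) ^ n * ((2 + ‖y₀‖) + ‖y - x‖) := by
            refine mul_le_mul (pow_le_pow_left₀ (by positivity) hxy n) ?_
              (norm_nonneg _) (by positivity)
            have : (0:ℝ) ≤ 2 + ‖y₀‖ := by positivity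
            linarith
        _ = ((2 + ‖y₀‖) + ‖y - x‖) ^ (n + 1) := (pow_succ _ n).symm
    have e1 : ‖F' y x‖ ≤ (|w x| * q x) *
        (gaussDensity d σ (y - x) / σ ^ 2 * ((d : ℝ) * ‖y - x‖)) := by
      refine le_trans (ContinuousLinearMap.opNorm_smul_le (w x * q x) (gradG d σ (y - x))) ?_
      rw [Real.norm_eq_abs, abs_mul, abs_of_nonneg (hq_nonneg x)]
      exact mul_le_mul_of_nonneg_left (norm_gradG_le hσ _)
        (mul_nonneg (abs_nonneg _) (hq_nonneg x))
    refine e1.trans ?_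
    calc (|w x| * q x) * (gaussDensity d σ (y - x) / σ ^ 2 * ((d : ℝ) * ‖y - x‖))
        = ((d : ℝ) * (σ ^ 2)⁻¹) * ((|w x| * (‖y - x‖ * gaussDensity d σ (y - x))) * q x) := by
          ring
      _ ≤ ((d : ℝ) * (σ ^ 2)⁻¹) * (((C * (1 + ‖x‖) ^ n) * (‖y - x‖ * gaussDensity d σ (y - x))) * q x) := by
          refine mul_le_mul_of_nonneg_left (mul_le_mul_of_nonneg_right
            (mul_le_mul_of_nonneg_right (hC x)
              (mul_nonneg (norm_nonneg _) (gauss_pos hσ _).le)) (hq_nonneg x)) (by positivity)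
      _ = (C * (d : ℝ) * (σ ^ 2)⁻¹) * ((((1 + ‖x‖) ^ n * ‖y - x‖) * gaussDensity d σ (y - x)) * q x) := by
          ring
      _ ≤ (C * (d : ℝ) * (σ ^ 2)⁻¹) * (B * q x) :=
          mul_le_mul_of_nonneg_left (mul_le_mul_of_nonneg_right key (hq_nonneg x)) hcst
      _ = (C * (d : ℝ) * (σ ^ 2)⁻¹ * B) * q x := by ring
  have h_diff : ∀ x : Fin d → ℝ, ∀ y ∈ Metric.ball y₀ 1,
      HasFDerivAt (fun y => w x * (gaussDensity d σ (y - x) * q x)) (F' y x) y := by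
    intro x y _
    have hg : HasFDerivAt (fun y : Fin d → ℝ => gaussDensity d σ (y - x))
        (gradG d σ (y - x)) y := by
      have h := (hasFDerivAt_gauss hσ (y - x)).comp y ((hasFDerivAt_id y).sub_const x)
      exact h
    have h2 := (hg.mul_const (q x)).const_mul (w x)
    refine h2.congr_fderiv ?_
    rw [hF'def]
    rw [smul_smul]
  have hF'meas : AEStronglyMeasurable (F' y₀) volume := by
    refine Continuous.aestronglyMeasurable ?_
    exact (hw.mul hqc).smul (continuous_gradG.comp (continuous_const.sub continuous_id))
  have hF'int : Integrable (F' y₀) volume := by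
    refine Integrable.mono' (hq_int.const_mul (C * (d : ℝ) * (σ ^ 2)⁻¹ * B)) hF'meas ?_
    exact Filter.Eventually.of_forall fun x =>
      h_bound x y₀ (Metric.mem_ball_self one_pos)
  have hderiv : HasFDerivAt (fun y => ∫ x, w x * (gaussDensity d σ (y - x) * q x))
      (∫ x, F' y₀ x) y₀ := by
    refine hasFDerivAt_integral_of_dominated_of_fderiv_le
      (bound := fun x => C * (d : ℝ) * (σ ^ 2)⁻¹ * B * q x) (Metric.ball_mem_nhds y₀ one_pos) ?_ ?_ hF'meas ?_ ?_ ?_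
    · exact Filter.Eventually.of_forall fun y =>
        (hw.mul ((gauss_cont.comp (continuous_const.sub continuous_id)).mul
          hqc)).aestronglyMeasurable
    · exact integrable_weight q hσ hq_int hq_nonneg hqc hw hC y₀
    · exact Filter.Eventually.of_forall fun x => h_bound x
    · exact hq_int.const_mul _
    · exact Filter.Eventually.of_forall fun x => h_diff x
  refine ⟨∫ x, F' y₀ x, hderiv, fun j => ?_⟩
  have i1 : Integrable (fun x => (x j * w x) * (gaussDensity d σ (y₀ - x) * q x)) := by
    refine integrable_weight q hσ hq_int hq_nonneg hqc
      ((continuous_apply j).mul hw) (C := C) (n := n + 1) (fun x => ?_) y₀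
    calc |x j * w x| = |x j| * |w x| := abs_mul _ _
      _ ≤ (1 + ‖x‖) * (C * (1 + ‖x‖) ^ n) := by
          refine mul_le_mul ?_ (hC x) (abs_nonneg _) (by positivity)
          have := norm_le_pi_norm x j
          have h2 : |x j| ≤ ‖x‖ := this
          linarith
      _ = C * (1 + ‖x‖) ^ (n + 1) := by ring
  have i2 : Integrable (fun x => w x * (gaussDensity d σ (y₀ - x) * q x)) :=
    integrable_weight q hσ hq_int hq_nonneg hqc hw hC y₀
  rw [ContinuousLinearMap.integral_apply hF'int (Pi.single j 1)]
  calc ∫ x, F' y₀ x (Pi.single j 1)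
      = ∫ x, ((σ ^ 2)⁻¹ * ((x j * w x) * (gaussDensity d σ (y₀ - x) * q x)) -
          ((σ ^ 2)⁻¹ * y₀ j) * (w x * (gaussDensity d σ (y₀ - x) * q x))) := by
        refine integral_congr_ae (Filter.Eventually.of_forall fun x => ?_)
        rw [hF'def]
        simp only [ContinuousLinearMap.smul_apply, smul_eq_mul, gradG_single, Pi.sub_apply]
        have hσ2 : σ ^ 2 ≠ 0 := by positivity
        field_simp
        ring
    _ = (σ ^ 2)⁻¹ * (∫ x, (x j * w x) * (gaussDensity d σ (y₀ - x) * q x)) -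
        ((σ ^ 2)⁻¹ * y₀ j) * ∫ x, w x * (gaussDensity d σ (y₀ - x) * q x) := by
        rw [integral_sub (i1.const_mul _) (i2.const_mul _), integral_const_mul,
          integral_const_mul]
    _ = (σ ^ 2)⁻¹ * ((∫ x, (x j * w x) * (gaussDensity d σ (y₀ - x) * q x)) -
          y₀ j * ∫ x, w x * (gaussDensity d σ (y₀ - x) * q x)) := by ring

end Q

end AnalyticalCov

open AnalyticalCov

/-- Analytical covariance identity: the covariance of the denoising posterior
`q(x|xt) = k(xt-x) q(x) / q̃(xt)` satisfies
`Σ(xt) = σ² ∇ μ(xt) = σ⁴ ∇² log q̃(xt) + σ² I`. -/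
theorem analytical_covariance_identity {d : ℕ} {σ : ℝ} (hσ : 0 < σ)
    (q : (Fin d → ℝ) → ℝ) (hq_smooth : ContDiff ℝ (⊤ : ℕ∞) q)
    (hq_int : Integrable q) (hq_nonneg : ∀ x, 0 ≤ q x) (hq_prob : ∫ x, q x = 1)
    (qt : (Fin d → ℝ) → ℝ)
    (hqt : ∀ y, qt y = ∫ x, gaussDensity d σ (y - x) * q x)
    (μ : (Fin d → ℝ) → (Fin d → ℝ))
    (hμ : ∀ y i, μ y i = ∫ x, (gaussDensity d σ (y - x) * q x / qt y) * x i)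
    (Sig : (Fin d → ℝ) → Matrix (Fin d) (Fin d) ℝ)
    (hSig : ∀ y i j, Sig y i j =
      (∫ x, (gaussDensity d σ (y - x) * q x / qt y) * (x i * x j)) - μ y i * μ y j)
    (xt : Fin d → ℝ) (hpos : 0 < qt xt) (i j : Fin d) :
    Sig xt i j = σ ^ 2 * fderiv ℝ (fun y => μ y i) xt (Pi.single j 1) ∧
    Sig xt i j =
      σ ^ 4 * fderiv ℝ
          (fun y => fderiv ℝ (fun z => Real.log (qt z)) y (Pi.single i 1)) xt
          (Pi.single j 1)
        + σ ^ 2 * (1 : Matrix (Fin d) (Fin d) ℝ) i j := by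
  have hqc : Continuous q := hq_smooth.continuous
  have hσ2 : (σ : ℝ) ^ 2 ≠ 0 := by positivity
  -- bounds for the weights
  have hb1 : ∀ x : Fin d → ℝ, |(fun _ : Fin d → ℝ => (1:ℝ)) x| ≤ 1 * (1 + ‖x‖) ^ 0 := by
    intro x; simp
  have hbi : ∀ (k : Fin d) (x : Fin d → ℝ),
      |(fun x : Fin d → ℝ => x k) x| ≤ 1 * (1 + ‖x‖) ^ 1 := by
    intro k x
    have h : |x k| ≤ ‖x‖ := norm_le_pi_norm x k
    simp only [pow_one, one_mul]
    linarith [norm_nonneg x]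
  -- positivity of qt
  have qt_pos : ∀ y, 0 < qt y := by
    intro y
    rw [hqt y]
    have hint : Integrable (fun x => gaussDensity d σ (y - x) * q x) := by
      have h := integrable_weight q hσ hq_int hq_nonneg hqc
        (continuous_const : Continuous fun _ : Fin d → ℝ => (1:ℝ)) hb1 y
      exact h.congr (Filter.Eventually.of_forall fun x => one_mul _)
    refine (integral_pos_iff_support_of_nonneg
      (fun x => mul_nonneg (gauss_pos hσ _).le (hq_nonneg x)) hint).mpr ?_
    have hsupp : Function.support (fun x => gaussDensity d σ (y - x) * q x) =
        Function.support q := by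
      ext x
      simp [Function.mem_support, mul_eq_zero, (gauss_pos hσ (y - x)).ne']
    rw [hsupp]
    have h1 : 0 < ∫ x, q x := by rw [hq_prob]; norm_num
    exact (integral_pos_iff_support_of_nonneg (fun x => hq_nonneg x) hq_int).mp h1
  have hp : qt xt ≠ 0 := (qt_pos xt).ne'
  -- the rewriting of qt as the w = 1 integral
  have hq1 : ∀ y, qt y = ∫ x, (1:ℝ) * (gaussDensity d σ (y - x) * q x) := by
    intro y
    rw [hqt y]
    exact integral_congr_ae (Filter.Eventually.of_forall fun x => (one_mul _).symm)
  -- packs at xt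
  obtain ⟨Li, hLi, hLiv⟩ := pack q hσ hq_int hq_nonneg hqc
    (continuous_apply i) (hbi i) xt
  obtain ⟨L1, hL1, hL1v⟩ := pack q hσ hq_int hq_nonneg hqc
    (continuous_const : Continuous fun _ : Fin d → ℝ => (1:ℝ)) hb1 xt
  have hL1qt : HasFDerivAt qt L1 xt :=
    hL1.congr_of_eventuallyEq (Filter.Eventually.of_forall hq1)
  have hAi : HasFDerivAt
      (fun y => ∫ x, x i * (gaussDensity d σ (y - x) * q x)) Li xt := hLi
  -- canonical value equations
  have eAj : (∫ x, x j * (1:ℝ) * (gaussDensity d σ (xt - x) * q x)) =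
      ∫ x, x j * (gaussDensity d σ (xt - x) * q x) :=
    integral_congr_ae (Filter.Eventually.of_forall fun x => by ring)
  have eqt : (∫ x, (1:ℝ) * (gaussDensity d σ (xt - x) * q x)) = qt xt := (hq1 xt).symm
  have hL1vj : L1 (Pi.single j 1) = (σ ^ 2)⁻¹ *
      ((∫ x, x j * (gaussDensity d σ (xt - x) * q x)) - xt j * qt xt) := by
    have h : L1 (Pi.single j 1) = (σ ^ 2)⁻¹ *
        ((∫ x, x j * (1:ℝ) * (gaussDensity d σ (xt - x) * q x)) -
          xt j * ∫ x, (1:ℝ) * (gaussDensity d σ (xt - x) * q x)) := hL1v j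
    rw [eAj, eqt] at h
    exact h
  have hLivj : Li (Pi.single j 1) = (σ ^ 2)⁻¹ *
      ((∫ x, x j * x i * (gaussDensity d σ (xt - x) * q x)) -
        xt j * ∫ x, x i * (gaussDensity d σ (xt - x) * q x)) := hLiv j
  -- abbreviations
  set a := ∫ x, x j * x i * (gaussDensity d σ (xt - x) * q x) with ha
  set b := ∫ x, x i * (gaussDensity d σ (xt - x) * q x) with hb
  set c := ∫ x, x j * (gaussDensity d σ (xt - x) * q x) with hc
  set p := qt xt with hpdef
  -- Sigma in canonical form
  have s1 : (∫ x, (gaussDensity d σ (xt - x) * q x / qt xt) * (x i * x j)) = a * p⁻¹ := by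
    rw [ha, ← integral_mul_const]
    exact integral_congr_ae (Filter.Eventually.of_forall fun x => by
      simp only [div_eq_mul_inv]; ring)
  have s2 : (∫ x, (gaussDensity d σ (xt - x) * q x / qt xt) * x i) = b * p⁻¹ := by
    rw [hb, ← integral_mul_const]
    exact integral_congr_ae (Filter.Eventually.of_forall fun x => by
      simp only [div_eq_mul_inv]; ring)
  have s3 : (∫ x, (gaussDensity d σ (xt - x) * q x / qt xt) * x j) = c * p⁻¹ := by
    rw [hc, ← integral_mul_const]
    exact integral_congr_ae (Filter.Eventually.of_forall fun x => by
      simp only [div_eq_mul_inv]; ring)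
  have hSig' : Sig xt i j = a * p⁻¹ - (b * p⁻¹) * (c * p⁻¹) := by
    rw [hSig xt i j, hμ xt i, hμ xt j, s1, s2, s3]
  -- μ as a function
  have μfun : (fun y => μ y i) =
      fun y => (∫ x, x i * (gaussDensity d σ (y - x) * q x)) * (qt y)⁻¹ := by
    funext y
    rw [hμ y i, ← integral_mul_const]
    exact integral_congr_ae (Filter.Eventually.of_forall fun x => by
      simp only [div_eq_mul_inv]; ring)
  have hinv : HasFDerivAt (fun y => (qt y)⁻¹)
      ((ContinuousLinearMap.smulRight (1 : ℝ →L[ℝ] ℝ) (-(qt xt ^ 2)⁻¹)).comp L1) xt :=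
    (hasFDerivAt_inv hp).comp xt hL1qt
  constructor
  · -- first identity
    have hprod := hAi.fun_mul hinv
    rw [hSig', μfun, hprod.fderiv]
    simp only [ContinuousLinearMap.add_apply, ContinuousLinearMap.coe_smul',
      Pi.smul_apply, ContinuousLinearMap.comp_apply,
      ContinuousLinearMap.smulRight_apply, ContinuousLinearMap.one_apply,
      smul_eq_mul]
    rw [hLivj, hL1vj]
    rw [← hpdef]
    rw [← hb]
    field_simp
    ring
  · -- second identity
    have hyi : HasFDerivAt (fun y : Fin d → ℝ => y i)
        (ContinuousLinearMap.proj i : (Fin d → ℝ) →L[ℝ] ℝ) xt :=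
      (ContinuousLinearMap.proj i :
        (Fin d → ℝ) →L[ℝ] ℝ).hasFDerivAt
    have Gfun : (fun y => fderiv ℝ (fun z => Real.log (qt z)) y (Pi.single i 1)) =
        fun y => (qt y)⁻¹ * ((σ ^ 2)⁻¹ *
          ((∫ x, x i * (gaussDensity d σ (y - x) * q x)) - y i * qt y)) := by
      funext y
      obtain ⟨L1y, hL1y, hL1yv⟩ := pack q hσ hq_int hq_nonneg hqc
        (continuous_const : Continuous fun _ : Fin d → ℝ => (1:ℝ)) hb1 y
      have hqtY : HasFDerivAt qt L1y y :=
        hL1y.congr_of_eventuallyEq (Filter.Eventually.of_forall hq1)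
      have hlog : HasFDerivAt (fun z => Real.log (qt z)) ((qt y)⁻¹ • L1y) y :=
        hqtY.log (qt_pos y).ne'
      rw [hlog.fderiv]
      simp only [ContinuousLinearMap.coe_smul', Pi.smul_apply, smul_eq_mul]
      have eAi : (∫ x, x i * (1:ℝ) * (gaussDensity d σ (y - x) * q x)) =
          ∫ x, x i * (gaussDensity d σ (y - x) * q x) :=
        integral_congr_ae (Filter.Eventually.of_forall fun x => by ring)
      have eqty : (∫ x, (1:ℝ) * (gaussDensity d σ (y - x) * q x)) = qt y := (hq1 y).symm
      have h : L1y (Pi.single i 1) = (σ ^ 2)⁻¹ *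
          ((∫ x, x i * (1:ℝ) * (gaussDensity d σ (y - x) * q x)) -
            y i * ∫ x, (1:ℝ) * (gaussDensity d σ (y - x) * q x)) := hL1yv i
      rw [eAi, eqty] at h
      rw [h]
    have hinner : HasFDerivAt
        (fun y => (σ ^ 2)⁻¹ *
          ((∫ x, x i * (gaussDensity d σ (y - x) * q x)) - y i * qt y))
        (((σ ^ 2)⁻¹ : ℝ) • (Li - (xt i • L1 + qt xt •
          (ContinuousLinearMap.proj i : (Fin d → ℝ) →L[ℝ] ℝ)))) xt :=
      (hAi.sub (hyi.mul hL1qt)).const_mul _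
    have htot := hinv.fun_mul hinner
    rw [hSig', Gfun, htot.fderiv]
    simp only [ContinuousLinearMap.add_apply, ContinuousLinearMap.coe_smul',
      Pi.smul_apply, ContinuousLinearMap.comp_apply, ContinuousLinearMap.sub_apply,
      ContinuousLinearMap.smulRight_apply, ContinuousLinearMap.one_apply,
      ContinuousLinearMap.proj_apply, smul_eq_mul]
    rw [hLivj, hL1vj]
    rw [← hpdef]
    rw [← hb]
    rw [Matrix.one_apply]
    rw [Pi.single_apply]
    by_cases hij : i = j
    · subst hij
      simp only [if_pos rfl]
      field_simp
      ring
    · simp only [if_neg hij]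
      field_simp
      ring
end

section
/- (Analytic DDPM variance via score norm) Under the setup of the covariance identity and the Fisher identity, the optimal isotropic variance satisfies σ_q*² = σ² - (σ⁴/d) E_{x̃~p̃_d}[‖∇_{x̃} log p̃_d(x̃)‖²]. -/
open MeasureTheory Real

/-- Analytic-DDPM variance via the score norm: under the covariance identity and
the Fisher identity, the optimal isotropic variance satisfies
`σq*² = σ² - (σ⁴/d) E_{xt ~ p̃_d}[‖∇ log p̃_d(xt)‖²]`. -/
theorem analytic_ddpm_variance {d : ℕ} (hd : 0 < d) {σ : ℝ} (hσ : 0 < σ)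
    (pd : (Fin d → ℝ) → ℝ)
    (hpd_pos : ∀ x, 0 < pd x) (hpd_int : Integrable pd) (hpd_prob : ∫ x, pd x = 1)
    (hpd_mom2 : Integrable (fun x => (∑ i, (x i) ^ 2) * pd x))
    (ptilde : (Fin d → ℝ) → ℝ)
    (hptilde : ∀ xt, ptilde xt = ∫ x, pd x * gaussDensity d σ (xt - x))
    (hptilde_prob : ∫ xt, ptilde xt = 1)
    (post : (Fin d → ℝ) → (Fin d → ℝ) → ℝ)
    (hpost : ∀ x xt, post x xt = pd x * gaussDensity d σ (xt - x) / ptilde xt)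
    (μ : (Fin d → ℝ) → (Fin d → ℝ))
    (hμ : ∀ xt i, μ xt i = ∫ x, x i * post x xt)
    (trCov : (Fin d → ℝ) → ℝ)
    (htrCov : ∀ xt, trCov xt = ∑ i, ∫ x, (x i - μ xt i) ^ 2 * post x xt)
    -- covariance identity: Cov_{p(x|xt)}[x] = σ⁴ ∇² log p̃_d(xt) + σ² I (trace form)
    (hCov : ∀ xt, trCov xt =
      (∑ i, σ ^ 4 *
        fderiv ℝ (fun y => fderiv ℝ (fun z => Real.log (ptilde z)) y (Pi.single i 1)) xt
          (Pi.single i 1)) + (d : ℝ) * σ ^ 2)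
    -- Fisher identity: E[∇² log p̃_d] = -E[(∇ log p̃_d)(∇ log p̃_d)ᵀ] (diagonal form)
    (hFisher : ∀ i : Fin d,
      (∫ xt, ptilde xt *
          fderiv ℝ (fun y => fderiv ℝ (fun z => Real.log (ptilde z)) y (Pi.single i 1)) xt
            (Pi.single i 1))
        = -∫ xt, ptilde xt *
            (fderiv ℝ (fun z => Real.log (ptilde z)) xt (Pi.single i 1)) ^ 2)
    (hint_hess : ∀ i : Fin d, Integrable (fun xt => ptilde xt *
      fderiv ℝ (fun y => fderiv ℝ (fun z => Real.log (ptilde z)) y (Pi.single i 1)) xt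
        (Pi.single i 1)))
    (hint_score : Integrable (fun xt => ptilde xt *
      ∑ i, (fderiv ℝ (fun z => Real.log (ptilde z)) xt (Pi.single i 1)) ^ 2))
    (sstar : ℝ)
    (hsstar : sstar = (1 / (d : ℝ)) * ∫ xt, ptilde xt * trCov xt) :
    sstar = σ ^ 2 - (σ ^ 4 / (d : ℝ)) *
      ∫ xt, ptilde xt *
        ∑ i, (fderiv ℝ (fun z => Real.log (ptilde z)) xt (Pi.single i 1)) ^ 2 := by
  set H : Fin d → (Fin d → ℝ) → ℝ := fun i xt =>
    fderiv ℝ (fun y => fderiv ℝ (fun z => Real.log (ptilde z)) y (Pi.single i 1)) xt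
      (Pi.single i 1) with hH
  set S : Fin d → (Fin d → ℝ) → ℝ := fun i xt =>
    (fderiv ℝ (fun z => Real.log (ptilde z)) xt (Pi.single i 1)) ^ 2 with hS
  have hpt_nonneg : ∀ xt, 0 ≤ ptilde xt := by
    intro xt
    rw [hptilde xt]
    apply integral_nonneg
    intro x
    have hg : 0 < gaussDensity d σ (xt - x) := by
      unfold gaussDensity
      exact mul_pos (Real.rpow_pos_of_pos (by positivity) _) (Real.exp_pos _)
    exact mul_nonneg (hpd_pos x).le hg.le
  have hpt_int : Integrable ptilde := by
    by_contra h
    rw [integral_undef h] at hptilde_prob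
    norm_num at hptilde_prob
  have hS_int : ∀ i, Integrable (fun xt => ptilde xt * S i xt) := by
    intro i
    refine hint_score.mono' ?_ ?_
    · refine hpt_int.aestronglyMeasurable.mul ?_
      have : Measurable (fun xt => (fderiv ℝ (fun z => Real.log (ptilde z)) xt)
          (Pi.single i 1)) := measurable_fderiv_apply_const ℝ _ _
      exact ((this.pow_const 2).aestronglyMeasurable)
    · refine Filter.Eventually.of_forall (fun xt => ?_)
      have h1 : 0 ≤ ptilde xt * S i xt := by
        have : 0 ≤ S i xt := by simp only [hS]; positivity
        exact mul_nonneg (hpt_nonneg xt) this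
      rw [Real.norm_of_nonneg h1]
      refine mul_le_mul_of_nonneg_left ?_ (hpt_nonneg xt)
      exact Finset.single_le_sum (f := fun j => S j xt)
        (fun j _ => by simp only [hS]; positivity) (Finset.mem_univ i)
  have key : (∫ xt, ptilde xt * trCov xt)
      = (∑ i, σ ^ 4 * ∫ xt, ptilde xt * H i xt) + (d : ℝ) * σ ^ 2 := by
    have h1 : (fun xt => ptilde xt * trCov xt)
        = fun xt => (∑ i, σ ^ 4 * (ptilde xt * H i xt)) + (d : ℝ) * σ ^ 2 * ptilde xt := by
      funext xt
      rw [hCov xt, mul_add, Finset.mul_sum]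
      congr 1
      · exact Finset.sum_congr rfl fun i _ => by ring
      · ring
    rw [h1]
    rw [integral_add (integrable_finset_sum _ (fun i _ => (hint_hess i).const_mul _))
      (hpt_int.const_mul _)]
    rw [integral_finset_sum _ (fun i _ => (hint_hess i).const_mul _)]
    simp only [integral_const_mul]
    rw [hptilde_prob, mul_one]
  have key2 : (∑ i, σ ^ 4 * ∫ xt, ptilde xt * H i xt)
      = -(σ ^ 4 * ∫ xt, ptilde xt * ∑ i, S i xt) := by
    have hswap : (∫ xt, ptilde xt * ∑ i, S i xt) = ∑ i, ∫ xt, ptilde xt * S i xt := by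
      rw [← integral_finset_sum _ (fun i _ => hS_int i)]
      congr 1
      funext xt
      rw [Finset.mul_sum]
    have heach : ∀ i : Fin d, σ ^ 4 * (∫ xt, ptilde xt * H i xt)
        = -(σ ^ 4 * ∫ xt, ptilde xt * S i xt) := by
      intro i
      rw [hFisher i]
      ring
    rw [Finset.sum_congr rfl (fun i _ => heach i), Finset.sum_neg_distrib, hswap,
      Finset.mul_sum]
  have hdne : (d : ℝ) ≠ 0 := Nat.cast_ne_zero.mpr hd.ne'
  rw [hsstar, key, key2]
  field_simp
  ring
end
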